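/- Let f : ℤⁿ → {0,1} and let A be a deterministic stream automaton with post-processing g such that g(A(σ)) = f(freq σ) for all streams σ of length at most n + 2m + 2, where m bounds the support sizes of certain vectors. Suppose there exist x, y ∈ ℤⁿ each supported on at most m coordinates and streams with A(κ(x + r·e_i)) = A(κ(y + r'·e_i)) for integers r' < r. Then for all z ∈ ℤⁿ, f(z) = f(z + (y − x) + (r' − r)·e_i). (I.e., f is invariant under adding the difference vector of a colliding pair.) -/

import Mathlib

/-!
Write `u = x + r·eᵢ` and `v = y + r'·eᵢ`. Since `A` is deterministic, the streams
`κ(u)·κ(-u)·κ(z)` and `κ(v)·κ(-u)·κ(z)` end in the same state, so `A` gives the same answer on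
both. Their frequency vectors are `z` and `z + (v - u)`, and both are short enough
(`≤ (m + 1) + (m + 1) + n`) for the answers to equal the values of `f` there.
-/
def freq {n : ℕ} (σ : List (Fin n × ℤ)) : Fin n → ℤ :=
  fun i => (σ.map fun u => if u.1 = i then u.2 else 0).sum

lemma freq_append {n : ℕ} (σ τ : List (Fin n × ℤ)) :
    freq (σ ++ τ) = freq σ + freq τ := by
  funext j
  simp [freq]

lemma card_filter_add_single_ne_zero_le {ι M : Type*} [Fintype ι] [DecidableEq ι]
    [AddZeroClass M] [DecidableEq M] (x : ι → M) (i : ι) (a : M) :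
    (Finset.univ.filter fun j => (x + Pi.single i a : ι → M) j ≠ 0).card ≤
      (Finset.univ.filter fun j => x j ≠ 0).card + 1 := by
  have hsub : (Finset.univ.filter fun j => (x + Pi.single i a : ι → M) j ≠ 0) ⊆
      insert i (Finset.univ.filter fun j => x j ≠ 0) := by
    intro j hj
    by_cases hji : j = i
    · simp [hji]
    · simp_all
  exact (Finset.card_le_card hsub).trans (Finset.card_insert_le _ _)

lemma apply_freq_add_eq_of_state_eq {n : ℕ} {Q : Type*}
    {A : List (Fin n × ℤ) → Q} {g : Q → List (Fin n × ℤ) → Q}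
    (hg : ∀ σ τ, A (σ ++ τ) = g (A σ) τ)
    {f : (Fin n → ℤ) → Bool} {post : Q → Bool} {L : ℕ}
    (hcorrect : ∀ σ : List (Fin n × ℤ), σ.length ≤ L → post (A σ) = f (freq σ))
    {σ₁ σ₂ τ : List (Fin n × ℤ)} (hcoll : A σ₁ = A σ₂)
    (h₁ : (σ₁ ++ τ).length ≤ L) (h₂ : (σ₂ ++ τ).length ≤ L) :
    f (freq σ₁ + freq τ) = f (freq σ₂ + freq τ) := by
  rw [← freq_append, ← freq_append, ← hcorrect _ h₁, ← hcorrect _ h₂, hg, hg, hcoll]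

theorem statement14_general {n m : ℕ} {Q : Type*}
    (A : List (Fin n × ℤ) → Q) (g : Q → List (Fin n × ℤ) → Q)
    (hg : ∀ σ τ, A (σ ++ τ) = g (A σ) τ)
    (f : (Fin n → ℤ) → Bool) (post : Q → Bool)
    (κ : (Fin n → ℤ) → List (Fin n × ℤ))
    (hκfreq : ∀ v, freq (κ v) = v)
    (hκlen : ∀ v, (κ v).length = (Finset.univ.filter fun i => v i ≠ 0).card)
    (hcorrect : ∀ σ : List (Fin n × ℤ), σ.length ≤ n + 2 * m + 2 →
      post (A σ) = f (freq σ))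
    (x y : Fin n → ℤ)
    (hx : (Finset.univ.filter fun i => x i ≠ 0).card ≤ m)
    (hy : (Finset.univ.filter fun i => y i ≠ 0).card ≤ m)
    (i : Fin n) (r r' : ℤ)
    (hcoll : A (κ (x + r • Pi.single i 1)) = A (κ (y + r' • Pi.single i 1))) :
    ∀ z : Fin n → ℤ, f z = f (z + (y - x) + (r' - r) • Pi.single i 1) := by
  intro z
  have hlen_bump : ∀ w : Fin n → ℤ, (Finset.univ.filter fun j => w j ≠ 0).card ≤ m →
      ∀ s : ℤ, (κ (w + s • Pi.single i 1)).length ≤ m + 1 := fun w hw s => by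
    rw [hκlen, ← Pi.single_smul', smul_eq_mul, mul_one]
    exact (card_filter_add_single_ne_zero_le w i s).trans (by omega)
  have hneg : -(x + r • Pi.single i 1) = -x + (-r) • Pi.single i 1 := by
    rw [neg_add, neg_smul]
  have hlz : (κ z).length ≤ n := by
    rw [hκlen]
    exact (Finset.card_filter_le _ _).trans (Finset.card_fin n).le
  have hlneg := hlen_bump (-x) (by simpa using hx) (-r)
  rw [← hneg] at hlneg
  have key := apply_freq_add_eq_of_state_eq hg hcorrect hcoll
    (τ := κ (-(x + r • Pi.single i 1)) ++ κ z)
    (by simp only [List.length_append]; linarith [hlen_bump x hx r])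
    (by simp only [List.length_append]; linarith [hlen_bump y hy r'])
  simp only [freq_append, hκfreq] at key
  convert key using 2 <;> module

/-- If a deterministic streaming algorithm `A` with post-processing `post` computes the
total function `f` on all streams of length at most `n + 2m + 2`, and the canonical
streams of `x + r·e_i` and `y + r'·e_i` (with `x, y` supported on at most `m`
coordinates, `r' < r`) drive `A` to the same state, then `f` is invariant under adding
`(y - x) + (r' - r)·e_i`. -/
theorem statement14 {n m : ℕ} {Q : Type*}
    (A : List (Fin n × ℤ) → Q) (g : Q → List (Fin n × ℤ) → Q)
    (hg : ∀ σ τ, A (σ ++ τ) = g (A σ) τ)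
    (f : (Fin n → ℤ) → Bool) (post : Q → Bool)
    (κ : (Fin n → ℤ) → List (Fin n × ℤ))
    (hκfreq : ∀ v, freq (κ v) = v)
    (hκlen : ∀ v, (κ v).length = (Finset.univ.filter fun i => v i ≠ 0).card)
    (hcorrect : ∀ σ : List (Fin n × ℤ), σ.length ≤ n + 2 * m + 2 →
      post (A σ) = f (freq σ))
    (x y : Fin n → ℤ)
    (hx : (Finset.univ.filter fun i => x i ≠ 0).card ≤ m)
    (hy : (Finset.univ.filter fun i => y i ≠ 0).card ≤ m)
    (i : Fin n) (r r' : ℤ) (hrr : r' < r)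
    (hcoll : A (κ (x + r • Pi.single i 1)) = A (κ (y + r' • Pi.single i 1))) :
    ∀ z : Fin n → ℤ, f z = f (z + (y - x) + (r' - r) • Pi.single i 1) :=
  statement14_general A g hg f post κ hκfreq hκlen hcorrect x y hx hy i r r' hcoll
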